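/- arXiv:1707.00771 — 4 statements merged into one kernel-verified Lean document; each statement's English description precedes it below -/
import Mathlib

section
/- A pair (x,y) ∈ ℝ^d × ℝ^d belongs to Π (i.e., for every non-increasing ψ : ℕ → ℝ_{≥0} with Σ_n ψ(n)^d = ∞ there exist infinitely many n ∈ ℕ with ‖nx+y‖ < ψ(n)) if and only if for every ℓ ∈ ℕ the sum S_ℓ(x,y) = Σ_{n≥ℓ} min_{ℓ≤m≤n} ‖mx+y‖^d is finite. -/
open scoped ENNReal
open Filter

/-- Sup-norm distance from `x ∈ ℝ^d` to the nearest point of `ℤ^d`. -/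
noncomputable def nrm {d : ℕ} (x : Fin d → ℝ) : ℝ :=
  ⨆ i, |x i - round (x i)|

/-- The class `𝒟` of non-increasing `ψ : ℕ → ℝ≥0` with `Σ ψ(n)^d = ∞`. -/
def calD (d : ℕ) : Set (ℕ → ℝ) :=
  {ψ | (∀ n, 0 ≤ ψ n) ∧ Antitone ψ ∧ ¬ Summable (fun n => ψ n ^ d)}

/-- The inhomogeneously `ψ`-approximable pairs. -/
def W {d : ℕ} (ψ : ℕ → ℝ) : Set ((Fin d → ℝ) × (Fin d → ℝ)) :=
  {p | ∃ᶠ n : ℕ in atTop, nrm (fun i => (n : ℝ) * p.1 i + p.2 i) < ψ n}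

/-- `Π = ⋂_{ψ ∈ 𝒟} W(ψ)`. -/
def PiSet (d : ℕ) : Set ((Fin d → ℝ) × (Fin d → ℝ)) := ⋂ ψ ∈ calD d, W ψ

/-- The vertical fiber `Φ(x)`. -/
def Phi {d : ℕ} (x : Fin d → ℝ) : Set (Fin d → ℝ) := {y | (x, y) ∈ PiSet d}

/-- `S_ℓ(x,y) = Σ_{n≥ℓ} min_{ℓ≤m≤n} ‖mx+y‖^d`, valued in `[0,∞]`. -/
noncomputable def S {d : ℕ} (l : ℤ) (x y : Fin d → ℝ) : ℝ≥0∞ :=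
  ∑' n : ℕ, ⨅ m ∈ Finset.Icc l (l + n),
    ENNReal.ofReal ((nrm (fun i => (m : ℝ) * x i + y i)) ^ d)

/-! With `g(m) = ‖mx + y‖` and `φ_ℓ(n) = min_{ℓ ≤ m ≤ ℓ+n} g(m)`, the running minimum `φ_ℓ` is
itself non-increasing. If some `S_ℓ` diverges, the shifted running minimum `ψ(n) = φ_ℓ(n - ℓ)` lies
in `𝒟` but satisfies `ψ(n) ≤ g(n)` for all `n ≥ ℓ`, so `(x, y) ∉ W(ψ)`. Conversely, if
`ψ ∈ 𝒟` and `ψ(n) ≤ g(n)` for all `n ≥ N`, then monotonicity of `ψ` gives `ψ(ℓ + n) ≤ φ_ℓ(n)`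
for `ℓ > N`, so `Σ ψ(n)^d ≤ S_ℓ + O(1) < ∞`, a contradiction. -/

open Finset

noncomputable def runningMin (g : ℤ → ℝ) (l : ℤ) (n : ℕ) : ℝ :=
  (Icc l (l + n)).inf' (nonempty_Icc.2 (by omega)) g

section RunningMin

variable {g : ℤ → ℝ} {l : ℤ}

lemma runningMin_le {n : ℕ} {m : ℤ} (hm : m ∈ Icc l (l + n)) : runningMin g l n ≤ g m :=
  inf'_le g hm

lemma le_runningMin_iff {a : ℝ} {n : ℕ} : a ≤ runningMin g l n ↔ ∀ m ∈ Icc l (l + n), a ≤ g m :=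
  le_inf'_iff _ g

lemma runningMin_nonneg (hg : ∀ m, 0 ≤ g m) (n : ℕ) : 0 ≤ runningMin g l n :=
  le_runningMin_iff.2 fun m _ => hg m

lemma runningMin_antitone : Antitone (runningMin g l) := fun _ _ hab =>
  inf'_mono g (Icc_subset_Icc le_rfl (by omega)) _

lemma iInf_ofReal_pow_eq_runningMin (hg : ∀ m, 0 ≤ g m) (d n : ℕ) :
    ⨅ m ∈ Icc l (l + n), ENNReal.ofReal (g m ^ d) = ENNReal.ofReal (runningMin g l n ^ d) := by
  obtain ⟨m₀, hm₀, hmin⟩ := exists_mem_eq_inf' (nonempty_Icc.2 (by omega : l ≤ l + n)) g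
  refine le_antisymm (iInf₂_le_of_le m₀ hm₀ (by rw [runningMin, hmin])) (le_iInf₂ fun m hm => ?_)
  exact ENNReal.ofReal_le_ofReal (pow_le_pow_left₀ (runningMin_nonneg hg n) (runningMin_le hm) d)

lemma runningMin_sub_le (L : ℕ) {n : ℕ} (hn : L ≤ n) : runningMin g L (n - L) ≤ g n :=
  runningMin_le (by simp only [mem_Icc]; omega)

lemma le_runningMin_of_antitone {ψ : ℕ → ℝ} (hψ : Antitone ψ) {N : ℕ} (hle : ∀ n ≥ N, ψ n ≤ g n)
    {L : ℕ} (hL : N ≤ L) (n : ℕ) : ψ (L + n) ≤ runningMin g L n := by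
  refine le_runningMin_iff.2 fun m hm => ?_
  lift m to ℕ using by simp only [mem_Icc] at hm; omega
  simp only [mem_Icc] at hm
  exact (hψ (by omega)).trans (hle m (by omega))

end RunningMin

lemma ENNReal.tsum_ofReal_ne_top_iff {α : Type*} {f : α → ℝ} (hf : ∀ a, 0 ≤ f a) :
    ∑' a, ENNReal.ofReal (f a) ≠ ⊤ ↔ Summable f :=
  ⟨fun h => by simpa only [ENNReal.toReal_ofReal (hf _)] using ENNReal.summable_toReal h,
    Summable.tsum_ofReal_ne_top⟩

section Approximation

variable {g : ℤ → ℝ} {d : ℕ}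

lemma summable_runningMin_pow_of_forall_frequently (hg : ∀ m, 0 ≤ g m)
    (h : ∀ ψ ∈ calD d, ∃ᶠ n : ℕ in atTop, g n < ψ n) (L : ℕ) :
    Summable fun n => runningMin g L n ^ d := by
  by_contra hdiv
  let ψ n := runningMin g L (n - L)
  have hψ : ψ ∈ calD d := by
    refine ⟨fun n => runningMin_nonneg hg _, fun a b hab => runningMin_antitone (by omega), ?_⟩
    rw [← summable_nat_add_iff L]
    simpa only [ψ, Nat.add_sub_cancel] using hdiv
  obtain ⟨n, hlt, hn⟩ := ((h ψ hψ).and_eventually (eventually_ge_atTop L)).exists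
  exact (runningMin_sub_le L hn).not_gt hlt

lemma frequently_lt_of_summable_runningMin_pow {ψ : ℕ → ℝ} (hψ : ψ ∈ calD d)
    (h : ∀ l : ℤ, 1 ≤ l → Summable fun n => runningMin g l n ^ d) :
    ∃ᶠ n : ℕ in atTop, g n < ψ n := by
  obtain ⟨hψ₀, hψ_anti, hψ_div⟩ := hψ
  by_contra hfreq
  obtain ⟨N, hN⟩ := eventually_atTop.1 (not_frequently.1 hfreq)
  have hle (n : ℕ) : ψ (N + 1 + n) ^ d ≤ runningMin g (N + 1 : ℕ) n ^ d :=
    pow_le_pow_left₀ (hψ₀ _)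
      (le_runningMin_of_antitone hψ_anti (fun n hn => not_lt.1 (hN n hn)) N.le_succ n) d
  refine hψ_div ((summable_nat_add_iff (N + 1)).1 ?_)
  refine (h (N + 1 : ℕ) (by omega)).of_nonneg_of_le (fun n => pow_nonneg (hψ₀ _) d) fun n => ?_
  simpa only [add_comm n] using hle n

end Approximation

theorem stmt3 {d : ℕ} (x y : Fin d → ℝ) :
    (x, y) ∈ PiSet d ↔ ∀ l : ℤ, 1 ≤ l → S l x y ≠ ⊤ := by
  set g : ℤ → ℝ := fun m => nrm fun i => (m : ℝ) * x i + y i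
  have hg (m : ℤ) : 0 ≤ g m := Real.iSup_nonneg fun i => abs_nonneg _
  have hS (l : ℤ) : S l x y ≠ ⊤ ↔ Summable fun n => runningMin g l n ^ d := by
    rw [S, tsum_congr fun n => iInf_ofReal_pow_eq_runningMin hg d n]
    exact ENNReal.tsum_ofReal_ne_top_iff fun n => pow_nonneg (runningMin_nonneg hg n) d
  have hPi : (x, y) ∈ PiSet d ↔ ∀ ψ ∈ calD d, ∃ᶠ n : ℕ in atTop, g n < ψ n := by
    simp only [PiSet, W, Set.mem_iInter, Set.mem_ofPred_eq, g, Int.cast_natCast]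
  simp only [hPi, hS]
  refine ⟨fun h l hl => ?_, fun h ψ hψ => frequently_lt_of_summable_runningMin_pow hψ h⟩
  lift l to ℕ using by omega
  exact summable_runningMin_pow_of_forall_frequently hg h l
end

section
/- If x ∈ ℝ^d is not badly approximable (i.e., inf_{n∈ℕ} n·‖nx‖^d = 0), then there exists y ∈ ℝ^d such that for every non-increasing ψ : ℕ → ℝ_{≥0} with Σ_n ψ(n)^d = ∞, there are infinitely many n ∈ ℕ with ‖nx+y‖ < ψ(n). That is, Φ(x) ≠ ∅. -/
open scoped ENNReal
open Filter

/-!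
Since `x` is not badly approximable, one can choose `m₀ < m₁ < ⋯` with `mₖ ‖mₖ x‖^d < 2^{-k}` and
`mₖ ‖mₖ₊₁ x‖ < 2^{-(k+1)}`. With `nₖ = m₀ + ⋯ + mₖ₋₁` and `y = -∑ⱼ (mⱼ x - round (mⱼ x))`, the
point `nₖ x + y` is congruent mod `ℤ^d` to the tail `-∑_{j ≥ k} (mⱼ x - round (mⱼ x))`, so
`‖nₖ x + y‖ ≤ ρₖ := ‖mₖ x‖ + 2^{-k} / mₖ` and `mₖ ρₖ^d ≤ 2^{d-k}`. If `ψ(n) ≤ ‖n x + y‖` for all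
large `n`, then, `ψ` being non-increasing, the sum of `ψ(n)^d` over the block `nₖ ≤ n < nₖ₊₁` of
length `mₖ` is at most `mₖ ρₖ^d`, and `∑ ψ(n)^d` converges.
-/

open Finset

section RoundingError

variable {d : ℕ}

noncomputable def roundErr (v : Fin d → ℝ) : Fin d → ℝ := fun i => v i - round (v i)

lemma nrm_nonneg (v : Fin d → ℝ) : 0 ≤ nrm v :=
  Real.iSup_nonneg fun _ => abs_nonneg _

lemma nrm_eq_norm_roundErr (v : Fin d → ℝ) : nrm v = ‖roundErr v‖ := by
  refine le_antisymm (Real.iSup_le (fun i => ?_) (norm_nonneg _))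
    ((pi_norm_le_iff_of_nonneg (nrm_nonneg v)).2 fun i => (Real.norm_eq_abs _).trans_le <|
      le_ciSup (f := fun j => |v j - round (v j)|) (Set.finite_range _).bddAbove i)
  simpa only [roundErr, Real.norm_eq_abs] using norm_le_pi_norm (roundErr v) i

lemma nrm_le_norm_sub_intCast (v : Fin d → ℝ) (z : Fin d → ℤ) :
    nrm v ≤ ‖v - fun i => (z i : ℝ)‖ := by
  rw [nrm_eq_norm_roundErr]
  refine (pi_norm_le_iff_of_nonneg (norm_nonneg _)).2 fun i => ?_
  simpa only [roundErr, Real.norm_eq_abs] using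
    (round_le (v i) (z i)).trans (norm_le_pi_norm (v - fun i => (z i : ℝ)) i)

lemma nrm_natCast_smul_le (q : ℕ) (v : Fin d → ℝ) : nrm ((q : ℝ) • v) ≤ q * nrm v := by
  calc nrm ((q : ℝ) • v) ≤ ‖(q : ℝ) • v - fun i => ((q * round (v i) : ℤ) : ℝ)‖ :=
        nrm_le_norm_sub_intCast _ _
    _ = ‖(q : ℝ) • roundErr v‖ := by
        congr 1; ext i
        simp only [roundErr, Pi.sub_apply, Pi.smul_apply, smul_eq_mul]; push_cast; ring
    _ = q * nrm v := by rw [norm_smul, nrm_eq_norm_roundErr, Real.norm_natCast]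

lemma nrm_sum_smul_sub_tsum_le (x : Fin d → ℝ) (m : ℕ → ℕ)
    (hs : Summable fun j => nrm ((m j : ℝ) • x)) (k : ℕ) :
    nrm (((∑ j ∈ range k, m j : ℕ) : ℝ) • x - ∑' j, roundErr ((m j : ℝ) • x)) ≤
      ∑' j, nrm ((m (j + k) : ℝ) • x) := by
  set e : ℕ → Fin d → ℝ := fun j => roundErr ((m j : ℝ) • x)
  have he : ∀ j, ‖e j‖ = nrm ((m j : ℝ) • x) := fun j => (nrm_eq_norm_roundErr _).symm
  have hes : Summable e := .of_norm (by simpa only [he] using hs)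
  have hround : (fun i => ((∑ j ∈ range k, round ((m j : ℝ) * x i) : ℤ) : ℝ)) =
      ∑ j ∈ range k, ((m j : ℝ) • x - e j) := by
    ext i; simp [e, roundErr, Finset.sum_apply]
  calc _ ≤ ‖(((∑ j ∈ range k, m j : ℕ) : ℝ) • x - ∑' j, e j) -
        fun i => ((∑ j ∈ range k, round ((m j : ℝ) * x i) : ℤ) : ℝ)‖ :=
        nrm_le_norm_sub_intCast _ _
    _ = ‖∑' j, e (j + k)‖ := by
        rw [hround, sum_sub_distrib, ← hes.sum_add_tsum_nat_add k, Nat.cast_sum, sum_smul,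
          ← norm_neg]
        congr 1; abel
    _ ≤ ∑' j, ‖e (j + k)‖ := norm_tsum_le_tsum_norm ((summable_nat_add_iff k).2 hes.norm)
    _ = ∑' j, nrm ((m (j + k) : ℝ) • x) := by simp only [he]

end RoundingError

section Series

lemma summable_of_mul_succ_le {a w : ℕ → ℝ} (ha : ∀ k, 0 ≤ a k) (hw : ∀ k, 1 ≤ w k)
    (h : ∀ k, w k * a (k + 1) ≤ (1 / 2) ^ (k + 1)) : Summable a :=
  (summable_nat_add_iff 1).1 <| summable_geometric_two.of_nonneg_of_le (fun k => ha _) fun k =>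
    (le_mul_of_one_le_left (ha _) (hw k)).trans <|
      (h k).trans (pow_le_pow_of_le_one (by norm_num) (by norm_num) k.le_succ)

lemma tsum_add_le_add_div {a w : ℕ → ℝ} (ha : ∀ k, 0 ≤ a k) (hw₁ : ∀ k, 1 ≤ w k)
    (hw : Monotone w) (h : ∀ k, w k * a (k + 1) ≤ (1 / 2) ^ (k + 1)) (k : ℕ) :
    ∑' j, a (j + k) ≤ a k + (1 / 2) ^ k / w k := by
  have hwk : 0 < w k := zero_lt_one.trans_le (hw₁ k)
  have hs : Summable fun j => a (j + k) :=
    (summable_nat_add_iff k).2 (summable_of_mul_succ_le ha hw₁ h)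
  have hb : ∀ j, a (j + 1 + k) ≤ (1 / 2) ^ k / w k / 2 * (1 / 2) ^ j := fun j => by
    have hwj : 0 < w (j + k) := zero_lt_one.trans_le (hw₁ _)
    calc a (j + 1 + k) = a (j + k + 1) := by rw [add_right_comm]
      _ ≤ (1 / 2) ^ (j + k + 1) / w (j + k) := by
          rw [le_div_iff₀ hwj, mul_comm]; exact h _
      _ ≤ (1 / 2) ^ (j + k + 1) / w k := by gcongr; exact hw (Nat.le_add_left k j)
      _ = (1 / 2) ^ k / w k / 2 * (1 / 2) ^ j := by ring
  calc ∑' j, a (j + k) = a k + ∑' j, a (j + 1 + k) := by rw [hs.tsum_eq_zero_add, zero_add]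
    _ ≤ a k + ∑' j, (1 / 2) ^ k / w k / 2 * (1 / 2 : ℝ) ^ j :=
        add_le_add_right (((summable_nat_add_iff 1).2 hs).tsum_le_tsum hb
          (summable_geometric_two.mul_left _)) _
    _ = a k + (1 / 2) ^ k / w k := by rw [tsum_mul_left, tsum_geometric_two]; ring

lemma mul_add_div_pow_le {d : ℕ} (hd : d ≠ 0) {w a t : ℝ} (hw : 1 ≤ w) (ha : 0 ≤ a)
    (ht₀ : 0 ≤ t) (ht₁ : t ≤ 1) (hwa : w * a ^ d ≤ t) : w * (a + t / w) ^ d ≤ 2 ^ d * t := by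
  have hw₀ : 0 < w := zero_lt_one.trans_le hw
  have htw : w * (t / w) ^ d ≤ t := by
    calc w * (t / w) ^ d ≤ w * (t / w) := by
          gcongr
          exact pow_le_of_le_one (by positivity) ((div_le_one hw₀).2 (ht₁.trans hw)) hd
      _ = t := mul_div_cancel₀ t hw₀.ne'
  calc w * (a + t / w) ^ d ≤ w * (2 ^ (d - 1) * (a ^ d + (t / w) ^ d)) := by
        gcongr; exact add_pow_le ha (by positivity) d
    _ = 2 ^ (d - 1) * (w * a ^ d + w * (t / w) ^ d) := by ring
    _ ≤ 2 ^ (d - 1) * (t + t) := by gcongr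
    _ = 2 ^ d * t := by
        rw [← two_mul, ← mul_assoc, ← pow_succ, Nat.sub_add_cancel (Nat.pos_of_ne_zero hd)]

theorem summable_of_antitone_of_eventually_le_blocks {f : ℕ → ℝ} (hf₀ : ∀ n, 0 ≤ f n)
    (hf : Antitone f) {u : ℕ → ℕ} (hu : StrictMono u) {ρ : ℕ → ℝ}
    (hfρ : ∀ᶠ k in atTop, f (u k) ≤ ρ k)
    (hρ : Summable fun k => ((u (k + 1) - u k : ℕ) : ℝ) * ρ k) : Summable f := by
  obtain ⟨N, hN⟩ := eventually_atTop.1 hfρ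
  set v : ℕ → ℕ := fun k => u (k + (N + 1))
  have hv : StrictMono v := hu.comp (strictMono_id.add_const _)
  have hvρ : ∀ k, f (v k) ≤ ρ (k + (N + 1)) := fun k => hN _ (by omega)
  have hvs : Summable fun k => ((v (k + 1) - v k : ℕ) : ℝ) * ρ (k + (N + 1)) := by
    simpa only [v, add_right_comm _ 1] using (summable_nat_add_iff (N + 1)).2 hρ
  refine summable_of_sum_range_le (c := ∑ j ∈ range (v 0), f j +
    ∑' k, ((v (k + 1) - v k : ℕ) : ℝ) * ρ (k + (N + 1))) hf₀ fun M => ?_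
  calc ∑ j ∈ range M, f j ≤ ∑ j ∈ range (v M), f j :=
        sum_le_sum_of_subset_of_nonneg (range_subset_range.2 (hv.id_le M)) fun j _ _ => hf₀ j
    _ = ∑ j ∈ range (v 0), f j + ∑ j ∈ Ico (v 0) (v M), f j :=
        (sum_range_add_sum_Ico _ (hv.monotone M.zero_le)).symm
    _ ≤ ∑ j ∈ range (v 0), f j +
          ∑ k ∈ range M, ((v (k + 1) - v k : ℕ) : ℝ) * ρ (k + (N + 1)) := by
        gcongr
        refine (le_sum_schlomilch' (fun _ _ _ h => hf h) (fun k => (Nat.zero_le _).trans_lt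
          (hu (by omega : 0 < k + (N + 1)))) hv.monotone M).trans (sum_le_sum fun k _ => ?_)
        rw [nsmul_eq_mul]
        exact mul_le_mul_of_nonneg_left (hvρ k) (Nat.cast_nonneg _)
    _ ≤ _ := add_le_add_right (hvs.sum_le_tsum _ fun k _ =>
          mul_nonneg (Nat.cast_nonneg _) ((hf₀ _).trans (hvρ k))) _

end Series

def NotBadlyApproximable {d : ℕ} (x : Fin d → ℝ) : Prop :=
  sInf {r : ℝ | ∃ n : ℕ, 0 < n ∧ r = n * nrm ((n : ℝ) • x) ^ d} = 0

namespace NotBadlyApproximable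

variable {d : ℕ} {x : Fin d → ℝ}

theorem exists_lt_mul_nrm_pow_lt (hx : NotBadlyApproximable x) (M : ℕ) {ε : ℝ} (hε : 0 < ε) :
    ∃ m : ℕ, M < m ∧ m * nrm ((m : ℝ) • x) ^ d < ε := by
  -- Passing from `m` to `(M + 1) m` costs at most a factor `(M + 1)^(d + 1)`, as `‖q v‖ ≤ q ‖v‖`.
  have hq : (0 : ℝ) < ((M + 1 : ℕ) : ℝ) ^ (d + 1) := by positivity
  have hlt := hx.trans_lt (div_pos hε hq)
  obtain ⟨_, ⟨m, hm, rfl⟩, hlt⟩ := exists_lt_of_csInf_lt (by exact ⟨_, 1, one_pos, rfl⟩) hlt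
  refine ⟨(M + 1) * m, by nlinarith, ?_⟩
  calc (((M + 1) * m : ℕ) : ℝ) * nrm ((((M + 1) * m : ℕ) : ℝ) • x) ^ d
      ≤ ((M + 1 : ℕ) * m : ℝ) * (((M + 1 : ℕ) : ℝ) * nrm ((m : ℝ) • x)) ^ d := by
        rw [Nat.cast_mul, mul_smul]
        gcongr
        exacts [nrm_nonneg _, nrm_natCast_smul_le _ _]
    _ = ((M + 1 : ℕ) : ℝ) ^ (d + 1) * (m * nrm ((m : ℝ) • x) ^ d) := by ring
    _ < ((M + 1 : ℕ) : ℝ) ^ (d + 1) * (ε / ((M + 1 : ℕ) : ℝ) ^ (d + 1)) := by gcongr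
    _ = ε := mul_div_cancel₀ _ hq.ne'

theorem dim_ne_zero (hx : NotBadlyApproximable x) : d ≠ 0 := by
  rintro rfl
  obtain ⟨m, hm, hlt⟩ := hx.exists_lt_mul_nrm_pow_lt 0 one_pos
  rw [pow_zero, mul_one, Nat.cast_lt_one] at hlt
  omega

theorem exists_lt_mul_nrm_pow_lt_and_mul_nrm_lt (hx : NotBadlyApproximable x) (M : ℕ) {ε : ℝ}
    (hε : 0 < ε) :
    ∃ m : ℕ, M < m ∧ m * nrm ((m : ℝ) • x) ^ d < ε ∧ M * nrm ((m : ℝ) • x) < ε := by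
  have hM : (0 : ℝ) < M + 1 := by positivity
  obtain ⟨m, hMm, hm⟩ :=
    hx.exists_lt_mul_nrm_pow_lt M (lt_min hε (pow_pos (div_pos hε hM) d))
  refine ⟨m, hMm, hm.trans_le (min_le_left _ _), ?_⟩
  have hsmall : nrm ((m : ℝ) • x) < ε / (M + 1) := by
    refine lt_of_pow_lt_pow_left₀ d (div_pos hε hM).le ?_
    calc nrm ((m : ℝ) • x) ^ d ≤ m * nrm ((m : ℝ) • x) ^ d :=
          le_mul_of_one_le_left (pow_nonneg (nrm_nonneg _) d) (by exact_mod_cast hMm.pos)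
      _ < _ := hm
      _ ≤ (ε / (M + 1)) ^ d := min_le_right _ _
  calc M * nrm ((m : ℝ) • x) ≤ (M + 1) * nrm ((m : ℝ) • x) := by
        gcongr; exacts [nrm_nonneg _, le_add_of_nonneg_right zero_le_one]
    _ < (M + 1) * (ε / (M + 1)) := by gcongr
    _ = ε := mul_div_cancel₀ _ hM.ne'

theorem exists_strictMono_seq (hx : NotBadlyApproximable x) :
    ∃ m : ℕ → ℕ, StrictMono m ∧ 0 < m 0 ∧ (∀ k, m k * nrm ((m k : ℝ) • x) ^ d ≤ (1 / 2) ^ k) ∧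
      ∀ k, m k * nrm ((m (k + 1) : ℝ) • x) ≤ (1 / 2) ^ (k + 1) := by
  choose f hf using fun M k => hx.exists_lt_mul_nrm_pow_lt_and_mul_nrm_lt M
    (pow_pos (one_half_pos : (0 : ℝ) < 1 / 2) k)
  let m : ℕ → ℕ := fun k => Nat.rec (f 0 0) (fun k mk => f mk (k + 1)) k
  refine ⟨m, strictMono_nat_of_lt_succ fun k => (hf _ _).1, (hf 0 0).1, ?_,
    fun k => (hf _ _).2.2.le⟩
  rintro (_ | k)
  exacts [(hf 0 0).2.1.le, (hf _ _).2.1.le]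

theorem exists_nrm_smul_add_le_of_summable_blocks (hx : NotBadlyApproximable x) :
    ∃ y : Fin d → ℝ, ∃ u : ℕ → ℕ, ∃ ρ : ℕ → ℝ, StrictMono u ∧
      (∀ k, nrm ((u k : ℝ) • x + y) ≤ ρ k) ∧
      Summable fun k => ((u (k + 1) - u k : ℕ) : ℝ) * ρ k ^ d := by
  obtain ⟨m, hm, hm₀, hmd, hnext⟩ := hx.exists_strictMono_seq
  have hm₁ : ∀ k, (1 : ℝ) ≤ m k := fun k => by
    exact_mod_cast hm₀.trans_le (hm.monotone k.zero_le)
  have hs := summable_of_mul_succ_le (a := fun k => nrm ((m k : ℝ) • x))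
    (fun k => nrm_nonneg _) hm₁ hnext
  refine ⟨-∑' j, roundErr ((m j : ℝ) • x), fun k => ∑ j ∈ range k, m j,
    fun k => nrm ((m k : ℝ) • x) + (1 / 2) ^ k / m k,
    strictMono_nat_of_lt_succ fun k => ?_, fun k => ?_, ?_⟩
  · simpa only [sum_range_succ] using
      Nat.lt_add_of_pos_right (hm₀.trans_le (hm.monotone k.zero_le))
  · rw [← sub_eq_add_neg]
    exact (nrm_sum_smul_sub_tsum_le x m hs k).trans <|
      tsum_add_le_add_div (a := fun k => nrm ((m k : ℝ) • x)) (fun k => nrm_nonneg _) hm₁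
        (Nat.mono_cast.comp hm.monotone) hnext k
  · refine (summable_geometric_two.mul_left (2 ^ d)).of_nonneg_of_le
      (fun k => mul_nonneg (Nat.cast_nonneg _) (pow_nonneg (add_nonneg (nrm_nonneg _)
        (by positivity)) d)) fun k => ?_
    simp only [sum_range_succ, Nat.add_sub_cancel_left]
    exact mul_add_div_pow_le hx.dim_ne_zero (hm₁ k) (nrm_nonneg _) (by positivity)
      (pow_le_one₀ (by norm_num) (by norm_num)) (hmd k)

end NotBadlyApproximable

theorem stmt5 {d : ℕ} (x : Fin d → ℝ)
    (hwell : sInf {r : ℝ | ∃ n : ℕ, 0 < n ∧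
      r = (n : ℝ) * (nrm (fun i => (n : ℝ) * x i)) ^ d} = 0) :
    Phi x ≠ ∅ := by
  obtain ⟨y, u, ρ, hu, hnear, hsum⟩ :=
    NotBadlyApproximable.exists_nrm_smul_add_le_of_summable_blocks (x := x) hwell
  refine Set.nonempty_iff_ne_empty.1 ⟨y, Set.mem_iInter₂.2 fun ψ ⟨hψ₀, hψ, hψd⟩ => ?_⟩
  by_contra hfin
  have hle : ∀ᶠ n : ℕ in atTop, ψ n ≤ nrm ((n : ℝ) • x + y) :=
    (not_frequently.1 hfin).mono fun n h => not_lt.1 h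
  refine hψd (summable_of_antitone_of_eventually_le_blocks (fun n => pow_nonneg (hψ₀ n) d)
    (fun a b h => pow_le_pow_left₀ (hψ₀ b) (hψ h) d) hu ?_ hsum)
  exact (hu.tendsto_atTop.eventually hle).mono fun k hk =>
    pow_le_pow_left₀ (hψ₀ _) (hk.trans (hnear k)) d
end

section
/- For every y ∈ ℝ^d and every v ∈ ℕ, (1/v)·Π^y ⊆ Π^y; that is, if x ∈ Π^y then x/v ∈ Π^y. -/
open scoped ENNReal
open Filter

/-- The horizontal fiber `Π^y`. -/
def PiY {d : ℕ} (y : Fin d → ℝ) : Set (Fin d → ℝ) := {x | (x, y) ∈ PiSet d}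

/-! If `ψ ∈ 𝒟` then also `n ↦ ψ(v n) ∈ 𝒟`, since a decreasing series diverges iff its
subseries along the multiples of `v` does. Applying `x ∈ Π^y` to that function, every `m` with
`‖m x + y‖ < ψ(v m)` gives `n = v m` with `‖n (x / v) + y‖ < ψ(n)`. -/

theorem summable_comp_mul_iff_of_antitone {f : ℕ → ℝ} (hf : Antitone f) (v : ℕ) [NeZero v] :
    Summable (fun n => f (v * n)) ↔ Summable f := by
  rw [← summable_indicator_mod_iff hf ((0 : ℕ) : ZMod v), summable_indicator_mod_iff_summable]
  simp only [add_zero]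

theorem comp_mul_mem_calD {d v : ℕ} (hv : 0 < v) {ψ : ℕ → ℝ} (hψ : ψ ∈ calD d) :
    (fun n => ψ (v * n)) ∈ calD d := by
  obtain ⟨hψ_nonneg, hψ_anti, hψ_div⟩ := hψ
  have : NeZero v := ⟨hv.ne'⟩
  have hpow_anti : Antitone (fun n => ψ n ^ d) :=
    fun _ _ hmn => pow_le_pow_left₀ (hψ_nonneg _) (hψ_anti hmn) d
  exact ⟨fun _ => hψ_nonneg _, hψ_anti.comp_monotone fun _ _ => Nat.mul_le_mul_left v,
    (summable_comp_mul_iff_of_antitone hpow_anti v).not.mpr hψ_div⟩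

theorem div_mem_W_of_mem_W_comp_mul {d v : ℕ} (hv : 0 < v) {ψ : ℕ → ℝ} {x y : Fin d → ℝ}
    (h : (x, y) ∈ W (fun n => ψ (v * n))) : ((fun i => x i / (v : ℝ)), y) ∈ W ψ := by
  have hv' : (v : ℝ) ≠ 0 := Nat.cast_ne_zero.mpr hv.ne'
  have hscale : ∀ (m : ℕ) (i : Fin d), ((v * m : ℕ) : ℝ) * (x i / v) + y i = m * x i + y i := by
    intro m i
    push_cast
    field_simp
  refine (tendsto_id.const_mul_atTop' hv).frequently ?_
  simpa only [W, Set.mem_ofPred_eq, id, hscale] using h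

theorem stmt9 {d : ℕ} (y : Fin d → ℝ) (v : ℕ) (hv : 0 < v) (x : Fin d → ℝ)
    (hx : x ∈ PiY y) : (fun i => x i / (v : ℝ)) ∈ PiY y := by
  simp only [PiY, PiSet, Set.mem_ofPred_eq, Set.mem_iInter] at hx ⊢
  exact fun ψ hψ => div_mem_W_of_mem_W_comp_mul hv (hx _ (comp_mul_mem_calD hv hψ))
end

section
/- Let d = 1. Then Π^0 = ℚ: a real number x satisfies, for every non-increasing ψ : ℕ → ℝ_{≥0} with Σψ(n) = ∞, that ‖nx‖ < ψ(n) for infinitely many n ∈ ℕ, if and only if x is rational. -/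
open scoped ENNReal
open Filter

/-- Distance from `t ∈ ℝ` to the nearest integer. -/
noncomputable def nrm1 (t : ℝ) : ℝ := |t - round t|

/-- `S_ℓ(x,y) = Σ_{n≥ℓ} min_{ℓ≤m≤n} ‖mx+y‖`, valued in `[0,∞]` (case `d = 1`). -/
noncomputable def S1 (l : ℤ) (x y : ℝ) : ℝ≥0∞ :=
  ∑' n : ℕ, ⨅ m ∈ Finset.Icc l (l + n), ENNReal.ofReal (nrm1 ((m : ℝ) * x + y))

/-- The class `𝒟` of non-increasing `ψ : ℕ → ℝ≥0` with `Σ ψ(n) = ∞` (case `d = 1`). -/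
def calD1 : Set (ℕ → ℝ) := {ψ | (∀ n, 0 ≤ ψ n) ∧ Antitone ψ ∧ ¬ Summable ψ}

/-- `Π` for `d = 1`. -/
def Pi1 : Set (ℝ × ℝ) :=
  {p | ∀ ψ ∈ calD1, ∃ᶠ n : ℕ in atTop, nrm1 ((n : ℝ) * p.1 + p.2) < ψ n}

/-- The vertical fiber `Φ(x)`. -/
def Phi1 (x : ℝ) : Set ℝ := {y | (x, y) ∈ Pi1}

/-- The horizontal fiber `Π^y`. -/
def PiY1 (y : ℝ) : Set ℝ := {x | (x, y) ∈ Pi1}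

/-!
For `x = p/q` rational, `‖nx‖ = 0` at every multiple `n` of `q`, while every `ψ ∈ 𝒟` is positive.
For `x` irrational, the running minimum `f(n) = min_{1 ≤ m ≤ n} ‖mx‖` is itself in `𝒟`, and
`‖nx‖ < f(n)` never happens. It is non-increasing by construction, and it is not summable because
`n f(n) ≥ 1/4` infinitely often: whenever `f` drops at `j + 1`, i.e. `‖(j+1)x‖ < ‖qx‖ = f(j)` with
`q ≤ j`, the nonzero integer `q·round((j+1)x) - (j+1)·round(qx)` has absolute value at most
`2 (j+1) f(j)`.
-/

open Finset Topology

lemma nrm1_intCast (z : ℤ) : nrm1 z = 0 := by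
  simp [nrm1]

lemma nrm1_pos_of_irrational {t : ℝ} (ht : Irrational t) : 0 < nrm1 t :=
  abs_pos.2 (sub_ne_zero.2 (ht.ne_int _))

lemma exists_nrm1_natCast_mul_lt (x : ℝ) {δ : ℝ} (hδ : 0 < δ) :
    ∃ m : ℕ, 0 < m ∧ nrm1 (m * x) < δ := by
  obtain ⟨n, hn⟩ := exists_nat_one_div_lt hδ
  obtain ⟨m, hm, -, hmx⟩ := Real.exists_nat_abs_mul_sub_round_le x n.succ_pos
  refine ⟨m, hm, hmx.trans_lt (lt_of_le_of_lt ?_ hn)⟩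
  gcongr
  linarith

lemma one_le_two_mul_mul_nrm1 (x : ℝ) {q m : ℕ} (hq : 0 < q) (hqm : q ≤ m)
    (h : nrm1 (m * x) < nrm1 (q * x)) : 1 ≤ 2 * m * nrm1 (q * x) := by
  set e := (q : ℝ) * x - round ((q : ℝ) * x)
  set e' := (m : ℝ) * x - round ((m : ℝ) * x)
  have hq' : (0 : ℝ) < q := by exact_mod_cast hq
  have hqm' : (q : ℝ) ≤ m := by exact_mod_cast hqm
  have he : nrm1 (q * x) = |e| := rfl
  have he' : nrm1 (m * x) = |e'| := rfl
  rw [he, he'] at h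
  rw [he]
  have hD : ((q * round ((m : ℝ) * x) - m * round ((q : ℝ) * x) : ℤ) : ℝ) = m * e - q * e' := by
    push_cast
    ring
  -- otherwise `m |e| = q |e'| < q |e| ≤ m |e|`
  have hD_ne : q * round ((m : ℝ) * x) - m * round ((q : ℝ) * x) ≠ 0 := by
    intro hD0
    rw [hD0, Int.cast_zero, eq_comm, sub_eq_zero] at hD
    have := congrArg abs hD
    rw [abs_mul, abs_mul, Nat.abs_cast, Nat.abs_cast] at this
    nlinarith [abs_nonneg e']
  have h1 : (1 : ℝ) ≤ |m * e - q * e'| := by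
    rw [← hD]
    exact_mod_cast Int.one_le_abs hD_ne
  have h2 : |m * e - q * e'| ≤ m * |e| + q * |e'| := by
    simpa only [abs_mul, Nat.abs_cast] using abs_sub (m * e) (q * e')
  nlinarith [abs_nonneg e']

lemma exists_succ_lt_of_lt {α : Type*} [LinearOrder α] {f : ℕ → α} (hf : Antitone f) {N m : ℕ}
    (h : f m < f N) : ∃ j ≥ N, f (j + 1) < f j := by
  by_contra! hmono
  have : f N ≤ f (max N m) := Nat.rel_of_forall_rel_succ_of_le_of_le (· ≤ ·) hmono le_rfl
    (le_max_left N m)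
  exact (this.trans (hf (le_max_right N m))).not_gt h

lemma not_summable_of_frequently_le_mul {f : ℕ → ℝ} (hf : Antitone f) {c : ℝ} (hc : 0 < c)
    (h : ∃ᶠ n in atTop, c ≤ n * f n) : ¬ Summable f := by
  intro hs
  have htail : Tendsto (fun n => ∑ k ∈ Ico (n / 2) n, f k) atTop (𝓝 0) := by
    have hlim := hs.tendsto_sum_tsum_nat
    simpa only [sum_Ico_eq_sub _ (Nat.div_le_self _ 2), sub_self, Function.comp_def] using
      hlim.sub (hlim.comp (Nat.tendsto_div_const_atTop two_ne_zero))
  obtain ⟨n, hn, hsmall⟩ := (h.and_eventually (htail.eventually (gt_mem_nhds (half_pos hc)))).exists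
  have hfn : 0 < f n := pos_of_mul_pos_right (hc.trans_le hn) n.cast_nonneg
  have hcard : (n : ℝ) ≤ 2 * ((n - n / 2 : ℕ) : ℝ) := by
    exact_mod_cast (by omega : n ≤ 2 * (n - n / 2))
  have hsum : ((n - n / 2 : ℕ) : ℝ) * f n ≤ ∑ k ∈ Ico (n / 2) n, f k := by
    simpa only [Nat.card_Ico, nsmul_eq_mul] using
      card_nsmul_le_sum (Ico (n / 2) n) f (f n) fun k hk => hf (mem_Ico.1 hk).2.le
  nlinarith

lemma pos_of_mem_calD1 {ψ : ℕ → ℝ} (hψ : ψ ∈ calD1) (n : ℕ) : 0 < ψ n := by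
  obtain ⟨hnonneg, hanti, hdiv⟩ := hψ
  refine (hnonneg n).lt_of_ne fun hzero => hdiv ?_
  refine summable_of_ne_finset_zero (s := range n) fun k hk => ?_
  exact le_antisymm (hzero ▸ hanti (not_lt.1 (mt mem_range.2 hk))) (hnonneg k)

lemma ratCast_mem_PiY1_zero (r : ℚ) : (r : ℝ) ∈ PiY1 0 := by
  intro ψ hψ
  refine frequently_atTop.2 fun N => ⟨N * r.den, Nat.le_mul_of_pos_right N r.pos, ?_⟩
  have hint : ((N * r.den : ℕ) : ℝ) * r + 0 = ((N * r.num : ℤ) : ℝ) := by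
    have : ((r * r.den : ℚ) : ℝ) = r.num := by exact_mod_cast r.mul_den_eq_num
    push_cast at this ⊢
    rw [add_zero, mul_assoc, mul_comm (r.den : ℝ), this]
  simpa only [hint, nrm1_intCast] using pos_of_mem_calD1 hψ _

/-- `min_{1 ≤ m ≤ n} ‖m x‖`, taken over `m = 1` also when `n = 0`. -/
noncomputable def minNrm1 (x : ℝ) (n : ℕ) : ℝ :=
  (Icc 1 (max 1 n)).inf' (nonempty_Icc.2 (le_max_left 1 n)) fun m => nrm1 (m * x)

namespace minNrm1

variable {x : ℝ}

lemma le {m n : ℕ} (h1 : 1 ≤ m) (hmn : m ≤ max 1 n) : minNrm1 x n ≤ nrm1 (m * x) :=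
  inf'_le _ (mem_Icc.2 ⟨h1, hmn⟩)

lemma exists_eq (x : ℝ) (n : ℕ) : ∃ m, 1 ≤ m ∧ m ≤ max 1 n ∧ minNrm1 x n = nrm1 (m * x) := by
  obtain ⟨m, hm, heq⟩ := exists_mem_eq_inf' (nonempty_Icc.2 (le_max_left 1 n))
    fun m : ℕ => nrm1 (m * x)
  exact ⟨m, (mem_Icc.1 hm).1, (mem_Icc.1 hm).2, heq⟩

lemma nonneg (x : ℝ) (n : ℕ) : 0 ≤ minNrm1 x n :=
  (le_inf'_iff _ _).2 fun _ _ => abs_nonneg _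

lemma antitone (x : ℝ) : Antitone (minNrm1 x) := fun _ _ hab =>
  inf'_mono _ (Icc_subset_Icc le_rfl (max_le_max le_rfl hab)) _

lemma pos (hx : Irrational x) (n : ℕ) : 0 < minNrm1 x n :=
  (lt_inf'_iff _).2 fun m hm => nrm1_pos_of_irrational (hx.natCast_mul (by grind))

lemma one_le_four_mul_mul_of_succ_lt {j : ℕ} (h : minNrm1 x (j + 1) < minNrm1 x j) :
    1 ≤ 4 * j * minNrm1 x j := by
  obtain ⟨m, hm1, hmj, hm⟩ := exists_eq x (j + 1)
  obtain ⟨q, hq1, hqj, hq⟩ := exists_eq x j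
  have hm_gt : max 1 j < m := by
    by_contra! hle
    exact (le hm1 hle).not_gt (hm ▸ h)
  have hmj' : m = j + 1 := by omega
  have hj : (1 : ℝ) ≤ j := by exact_mod_cast (by omega : 1 ≤ j)
  subst hmj'
  have key := one_le_two_mul_mul_nrm1 x hq1 (by omega) (hq ▸ hm ▸ h)
  rw [← hq] at key
  push_cast at key
  nlinarith [nonneg x j]

lemma frequently_succ_lt (hx : Irrational x) : ∃ᶠ j in atTop, minNrm1 x (j + 1) < minNrm1 x j := by
  refine frequently_atTop.2 fun N => ?_
  obtain ⟨m, hm, hmx⟩ := exists_nrm1_natCast_mul_lt x (pos hx N)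
  exact exists_succ_lt_of_lt (antitone x) ((le hm (le_max_right 1 m)).trans_lt hmx)

lemma not_summable (hx : Irrational x) : ¬ Summable (minNrm1 x) :=
  not_summable_of_frequently_le_mul (antitone x) (by norm_num : (0 : ℝ) < 1 / 4)
    ((frequently_succ_lt hx).mono fun j hj => by
      have := one_le_four_mul_mul_of_succ_lt hj
      linarith)

lemma mem_calD1 (hx : Irrational x) : minNrm1 x ∈ calD1 :=
  ⟨nonneg x, antitone x, not_summable hx⟩

end minNrm1

lemma notMem_PiY1_zero_of_irrational {x : ℝ} (hx : Irrational x) : x ∉ PiY1 0 := fun h =>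
  ((h _ (minNrm1.mem_calD1 hx)).and_eventually (eventually_ge_atTop 1)).exists.elim
    fun n ⟨hlt, hn⟩ => (minNrm1.le hn (le_max_right 1 n)).not_gt (by simpa using hlt)

theorem stmt14 : PiY1 0 = Set.range ((↑) : ℚ → ℝ) := by
  ext x
  constructor
  · intro hx
    by_contra hirr
    exact notMem_PiY1_zero_of_irrational hirr hx
  · rintro ⟨r, rfl⟩
    exact ratCast_mem_PiY1_zero r
end
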